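/- Let M and Y be random variables on a probability space, with M taking values in a finite set ℳ of cardinality d ≥ 2, and let 0 ≤ ε ≤ 1. Fix an outcome y of Y with P(Y = y) > 0, and suppose the variational distance between the distribution of M and the conditional distribution of M given Y = y satisfies ∑_{m∈ℳ} |P(M = m) − P(M = m | Y = y)| ≤ ε. Then H(M) − H(M | Y = y) ≤ h(ε/2) + (ε/2)·log(d − 1), where H(M | Y = y) denotes the Shannon entropy of the conditional distribution of M given Y = y. -/

import Mathlib

/-!
Let `p` and `q` be the laws of `M` and of `M` given `Y = y`. Write `p = c + u` and `q = c + v` with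
`c = min p q`; both `u` and `v` have mass `T = ½ ∑ |p - q|`.
Subadditivity of `η(x) = -x log x`, and Jensen on the support of `u` (at most `d - 1` points), give
`H(p) ≤ ∑ η(c) + η(T) + T log (d - 1)`. Concavity of `η`, with `q` the mixture of `c / (1 - T)`
and `v / T` with weights `1 - T` and `T`, gives `H(q) ≥ ∑ η(c) - η(1 - T)`. So `H(p) - H(q)` is at
most the `d`-ary entropy `h(T) + T log (d - 1)`, which increases on `[0, 1 - 1/d]`, an interval
containing `T ≤ ε/2 ≤ 1/2`.
-/

open MeasureTheory

/-- Shannon entropy (in nats) of a distribution on a finite set, with the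
convention `0 * log 0 = 0` (automatic since `Real.log 0 = 0`). -/
noncomputable def shannonEnt {S : Type*} [Fintype S] (p : S → ℝ) : ℝ :=
  -∑ s, p s * Real.log (p s)

/-- The probability that a random variable `X` takes the value `s`. -/
noncomputable def prob {Ω S : Type*} [MeasurableSpace Ω] (μ : Measure Ω)
    (X : Ω → S) (s : S) : ℝ :=
  (μ (X ⁻¹' {s})).toReal

/-- Shannon entropy of (the distribution of) a finitely-valued random variable. -/
noncomputable def entropy {Ω S : Type*} [MeasurableSpace Ω] [Fintype S]
    (μ : Measure Ω) (X : Ω → S) : ℝ :=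
  shannonEnt (fun s => prob μ X s)

/-- Mutual information `I(X;Y) = H(X) + H(Y) - H(X,Y)`. -/
noncomputable def mutualInfo {Ω S T : Type*} [MeasurableSpace Ω] [Fintype S] [Fintype T]
    (μ : Measure Ω) (X : Ω → S) (Y : Ω → T) : ℝ :=
  entropy μ X + entropy μ Y - entropy μ (fun ω => (X ω, Y ω))

/-- Conditional mutual information `I(X;Y|Z) = I(X;(Y,Z)) - I(X;Z)`. -/
noncomputable def condMutualInfo {Ω S T U : Type*} [MeasurableSpace Ω]
    [Fintype S] [Fintype T] [Fintype U]
    (μ : Measure Ω) (X : Ω → S) (Y : Ω → T) (Z : Ω → U) : ℝ :=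
  mutualInfo μ X (fun ω => (Y ω, Z ω)) - mutualInfo μ X Z

/-- The conditional probability `P(X = s | Y = y)`. -/
noncomputable def condProb {Ω S T : Type*} [MeasurableSpace Ω] (μ : Measure Ω)
    (X : Ω → S) (Y : Ω → T) (y : T) (s : S) : ℝ :=
  (μ (X ⁻¹' {s} ∩ Y ⁻¹' {y})).toReal / (μ (Y ⁻¹' {y})).toReal

/-- Binary entropy function (in nats). -/
noncomputable def binEnt (t : ℝ) : ℝ :=
  -(t * Real.log t) - (1 - t) * Real.log (1 - t)


open Real Finset

lemma binEnt_eq_binEntropy (t : ℝ) : binEnt t = binEntropy t := by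
  simp only [binEnt, binEntropy, log_inv]
  ring

lemma shannonEnt_eq_sum_negMulLog {S : Type*} [Fintype S] (p : S → ℝ) :
    shannonEnt p = ∑ s, negMulLog (p s) := by
  simp [shannonEnt, negMulLog, sum_neg_distrib]

namespace Real

lemma negMulLog_add_le {x y : ℝ} (hx : 0 ≤ x) (hy : 0 ≤ y) :
    negMulLog (x + y) ≤ negMulLog x + negMulLog y := by
  have mul_log_le : ∀ {a b : ℝ}, 0 ≤ a → 0 ≤ b → a * log a ≤ a * log (a + b) := by
    intro a b ha hb
    rcases ha.eq_or_lt with rfl | ha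
    · simp
    · exact mul_le_mul_of_nonneg_left (log_le_log ha (by linarith)) ha.le
  have hxy := mul_log_le hx hy
  have hyx := mul_log_le hy hx
  rw [add_comm y x] at hyx
  simp only [negMulLog]
  linear_combination hxy + hyx

lemma sum_negMulLog_le {ι : Type*} (s : Finset ι) {u : ι → ℝ} (hu : ∀ i ∈ s, 0 ≤ u i) :
    ∑ i ∈ s, negMulLog (u i) ≤ negMulLog (∑ i ∈ s, u i) + (∑ i ∈ s, u i) * log #s := by
  rcases s.eq_empty_or_nonempty with rfl | hs
  · simp
  have hn : (0 : ℝ) < #s := by exact_mod_cast hs.card_pos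
  have jensen := concaveOn_negMulLog.le_map_sum (t := s) (w := fun _ => (#s : ℝ)⁻¹) (p := u)
    (fun _ _ => by positivity) (by simp [hn.ne']) hu
  have hinv : negMulLog (#s : ℝ)⁻¹ = (#s : ℝ)⁻¹ * log #s := by simp [negMulLog, log_inv]
  simp only [smul_eq_mul, ← mul_sum, negMulLog_mul, hinv] at jensen
  calc ∑ i ∈ s, negMulLog (u i) = #s * ((#s : ℝ)⁻¹ * ∑ i ∈ s, negMulLog (u i)) := by
        field_simp
    _ ≤ #s * ((∑ i ∈ s, u i) * ((#s : ℝ)⁻¹ * log #s)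
          + (#s : ℝ)⁻¹ * negMulLog (∑ i ∈ s, u i)) := by gcongr
    _ = _ := by field_simp; ring

lemma negMulLog_add_mul_log_one_sub_le {c v t : ℝ} (hc : 0 ≤ c) (hv : 0 ≤ v) (hvt : v ≤ t)
    (hct : c ≤ 1 - t) : negMulLog c + c * log (1 - t) ≤ negMulLog (c + v) := by
  have ht : 0 ≤ t := hv.trans hvt
  rcases (show t ≤ 1 by linarith).eq_or_lt with rfl | ht1
  · obtain rfl : c = 0 := by linarith
    simpa using negMulLog_nonneg hv hvt
  have ha : 0 < 1 - t := by linarith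
  have hmix : (1 - t) * (c / (1 - t)) + t * (v / t) = c + v := by
    rcases ht.eq_or_lt with rfl | htpos
    · simp [le_antisymm hvt hv]
    · field_simp
  have hconc := concaveOn_negMulLog.2 (x := c / (1 - t)) (y := v / t)
    (Set.mem_Ici.2 (by positivity)) (Set.mem_Ici.2 (by positivity)) ha.le ht (by ring)
  simp only [smul_eq_mul, hmix] at hconc
  have hv' : 0 ≤ t * negMulLog (v / t) :=
    mul_nonneg ht (negMulLog_nonneg (by positivity) (div_le_one_of_le₀ hvt ht))
  have hc' : (1 - t) * negMulLog (c / (1 - t)) = negMulLog c + c * log (1 - t) := by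
    have h := negMulLog_mul (1 - t) (c / (1 - t))
    rw [mul_div_cancel₀ c ha.ne'] at h
    have hη : c / (1 - t) * negMulLog (1 - t) = -(c * log (1 - t)) := by
      rw [negMulLog]
      field_simp
    linarith
  linarith

end Real

section TotalVariation

variable {ι : Type*} [Fintype ι]

noncomputable def tvDist (p q : ι → ℝ) : ℝ := (∑ i, |p i - q i|) / 2

lemma tvDist_nonneg (p q : ι → ℝ) : 0 ≤ tvDist p q := by
  unfold tvDist
  positivity

lemma tvDist_comm (p q : ι → ℝ) : tvDist p q = tvDist q p := by
  simp only [tvDist, abs_sub_comm]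

variable {p q : ι → ℝ}

lemma sum_sub_min_eq_tvDist (hpq : ∑ i, p i = ∑ i, q i) :
    ∑ i, (p i - min (p i) (q i)) = tvDist p q := by
  have hsplit : ∀ i, p i - min (p i) (q i) = (|p i - q i| + (p i - q i)) / 2 := by
    intro i
    rcases le_total (p i) (q i) with h | h
    · rw [min_eq_left h, abs_of_nonpos (sub_nonpos.2 h)]; ring
    · rw [min_eq_right h, abs_of_nonneg (sub_nonneg.2 h)]; ring
  simp only [hsplit, ← sum_div, sum_add_distrib, sum_sub_distrib, hpq, sub_self, add_zero, tvDist]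

lemma card_filter_lt_lt_card [Nonempty ι] (hpq : ∑ i, p i = ∑ i, q i) :
    #{i | q i < p i} < Fintype.card ι := by
  obtain ⟨i, -, hi⟩ := exists_le_of_sum_le univ_nonempty hpq.le
  exact card_lt_univ_of_notMem (by simpa using hi)

lemma shannonEnt_le_sum_negMulLog_min (hp : ∀ i, 0 ≤ p i) (hq : ∀ i, 0 ≤ q i)
    (hpq : ∑ i, p i = ∑ i, q i) :
    shannonEnt p ≤ ∑ i, negMulLog (min (p i) (q i)) + negMulLog (tvDist p q)
      + tvDist p q * log ((Fintype.card ι : ℝ) - 1) := by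
  set s : Finset ι := {i | q i < p i}
  have hexcess : ∀ i, p i - min (p i) (q i) ≠ 0 → q i < p i := by
    intro i hi
    by_contra his
    exact hi (by rw [min_eq_left (not_lt.1 his), sub_self])
  have hmass : ∑ i ∈ s, (p i - min (p i) (q i)) = tvDist p q := by
    rw [sum_filter_of_ne fun i _ => hexcess i, sum_sub_min_eq_tvDist hpq]
  have hentropy : ∑ i, negMulLog (p i - min (p i) (q i))
      = ∑ i ∈ s, negMulLog (p i - min (p i) (q i)) := by
    refine (sum_filter_of_ne fun i _ hi => hexcess i ?_).symm
    rintro h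
    simp [h] at hi
  have hlog : tvDist p q * log #s ≤ tvDist p q * log ((Fintype.card ι : ℝ) - 1) := by
    rcases s.eq_empty_or_nonempty with hs | hs
    · simp [← hmass, hs]
    have : Nonempty ι := ⟨hs.choose⟩
    have hcard : (#s : ℝ) + 1 ≤ Fintype.card ι := by
      exact_mod_cast card_filter_lt_lt_card hpq
    refine mul_le_mul_of_nonneg_left (log_le_log ?_ (by linarith)) (tvDist_nonneg p q)
    exact_mod_cast hs.card_pos
  calc shannonEnt p
      ≤ ∑ i, (negMulLog (min (p i) (q i)) + negMulLog (p i - min (p i) (q i))) := by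
        rw [shannonEnt_eq_sum_negMulLog]
        refine sum_le_sum fun i _ => ?_
        simpa using negMulLog_add_le (le_min (hp i) (hq i)) (sub_nonneg.2 (min_le_left (p i) (q i)))
    _ ≤ ∑ i, negMulLog (min (p i) (q i)) + negMulLog (tvDist p q) + tvDist p q * log #s := by
        rw [sum_add_distrib, hentropy, add_assoc, ← hmass]
        gcongr
        exact sum_negMulLog_le s fun i _ => sub_nonneg.2 (min_le_left (p i) (q i))
    _ ≤ _ := by linarith

lemma sum_negMulLog_min_le_shannonEnt (hp : ∀ i, 0 ≤ p i) (hq : ∀ i, 0 ≤ q i)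
    (hp1 : ∑ i, p i = 1) (hq1 : ∑ i, q i = 1) :
    ∑ i, negMulLog (min (p i) (q i)) + (1 - tvDist p q) * log (1 - tvDist p q)
      ≤ shannonEnt q := by
  set T := tvDist p q
  have hexcess : ∑ i, (q i - min (p i) (q i)) = T := by
    simpa only [min_comm, tvDist_comm q p] using sum_sub_min_eq_tvDist (hq1.trans hp1.symm)
  have hoverlap : ∑ i, min (p i) (q i) = 1 - T := by
    rw [← hexcess, sum_sub_distrib, hq1]; ring
  have hpointwise : ∀ i, negMulLog (min (p i) (q i)) + min (p i) (q i) * log (1 - T)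
      ≤ negMulLog (q i) := by
    intro i
    have hv := single_le_sum (f := fun i => q i - min (p i) (q i))
      (fun j _ => sub_nonneg.2 (min_le_right (p j) (q j))) (mem_univ i)
    have hc := single_le_sum (f := fun i => min (p i) (q i))
      (fun j _ => le_min (hp j) (hq j)) (mem_univ i)
    simpa using negMulLog_add_mul_log_one_sub_le (le_min (hp i) (hq i))
      (sub_nonneg.2 (min_le_right (p i) (q i))) (hv.trans hexcess.le) (hc.trans hoverlap.le)
  calc ∑ i, negMulLog (min (p i) (q i)) + (1 - T) * log (1 - T)
      = ∑ i, (negMulLog (min (p i) (q i)) + min (p i) (q i) * log (1 - T)) := by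
        rw [sum_add_distrib, ← sum_mul, hoverlap]
    _ ≤ shannonEnt q := by
        rw [shannonEnt_eq_sum_negMulLog]
        exact sum_le_sum fun i _ => hpointwise i

theorem shannonEnt_sub_le_qaryEntropy (hp : ∀ i, 0 ≤ p i) (hq : ∀ i, 0 ≤ q i)
    (hp1 : ∑ i, p i = 1) (hq1 : ∑ i, q i = 1) :
    shannonEnt p - shannonEnt q ≤ qaryEntropy (Fintype.card ι) (tvDist p q) := by
  have hupper := shannonEnt_le_sum_negMulLog_min hp hq (hp1.trans hq1.symm)
  have hlower := sum_negMulLog_min_le_shannonEnt hp hq hp1 hq1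
  simp only [qaryEntropy, binEntropy_eq_negMulLog_add_negMulLog_one_sub, Int.cast_sub,
    Int.cast_natCast, Int.cast_one]
  have hη : negMulLog (1 - tvDist p q) = -((1 - tvDist p q) * log (1 - tvDist p q)) := by
    rw [negMulLog, neg_mul]
  linarith

end TotalVariation

section Probability

variable {Ω α β : Type*} [MeasurableSpace Ω]

lemma prob_nonneg (μ : Measure Ω) (X : Ω → α) (a : α) : 0 ≤ prob μ X a :=
  ENNReal.toReal_nonneg

lemma condProb_nonneg (μ : Measure Ω) (X : Ω → α) (Y : Ω → β) (y : β) (a : α) :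
    0 ≤ condProb μ X Y y a :=
  div_nonneg ENNReal.toReal_nonneg ENNReal.toReal_nonneg

variable {μ : Measure Ω} [Fintype α] [MeasurableSpace α] [MeasurableSingletonClass α] {X : Ω → α}

lemma sum_toReal_measure_preimage_singleton_inter (hX : Measurable X) {A : Set Ω}
    (hA : μ A ≠ ⊤) : ∑ a, (μ (X ⁻¹' {a} ∩ A)).toReal = (μ A).toReal := by
  have : IsFiniteMeasure (μ.restrict A) := isFiniteMeasure_restrict.2 hA
  simpa [measureReal_def, Measure.restrict_apply (hX (measurableSet_singleton _))] using
    sum_measureReal_preimage_singleton (μ := μ.restrict A) univ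
      fun a _ => hX (measurableSet_singleton a)

lemma sum_prob_eq_one [IsProbabilityMeasure μ] (hX : Measurable X) : ∑ a, prob μ X a = 1 := by
  simpa [prob] using sum_toReal_measure_preimage_singleton_inter hX (measure_ne_top μ Set.univ)

lemma sum_condProb_eq_one (hX : Measurable X) {Y : Ω → β} {y : β}
    (hy : 0 < (μ (Y ⁻¹' {y})).toReal) : ∑ a, condProb μ X Y y a = 1 := by
  simp only [condProb, ← sum_div]
  rw [sum_toReal_measure_preimage_singleton_inter hX (ENNReal.toReal_pos_iff.1 hy).2.ne,
    div_self hy.ne']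

end Probability

theorem entropy_difference_bound_of_variational_distance_general
    {Ω 𝓜 𝒴 : Type*} [MeasurableSpace Ω]
    [Fintype 𝓜] [MeasurableSpace 𝓜] [MeasurableSingletonClass 𝓜]
    (μ : Measure Ω) [IsProbabilityMeasure μ]
    (M : Ω → 𝓜) (Y : Ω → 𝒴) (hM : Measurable M)
    (hd : 2 ≤ Fintype.card 𝓜)
    (ε : ℝ) (hε0 : 0 ≤ ε) (hε1 : ε ≤ 1)
    (y : 𝒴) (hy : 0 < (μ (Y ⁻¹' {y})).toReal)
    (hvar : ∑ m, |prob μ M m - condProb μ M Y y m| ≤ ε) :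
    entropy μ M - shannonEnt (fun m => condProb μ M Y y m)
      ≤ binEnt (ε / 2) + (ε / 2) * Real.log ((Fintype.card 𝓜 : ℝ) - 1) := by
  have hT : tvDist (prob μ M) (condProb μ M Y y) ≤ ε / 2 := by
    unfold tvDist
    linarith
  have hhalf : ε / 2 ≤ 1 - 1 / (Fintype.card 𝓜 : ℝ) := by
    have : (2 : ℝ) ≤ Fintype.card 𝓜 := by exact_mod_cast hd
    have : 1 / (Fintype.card 𝓜 : ℝ) ≤ 1 / 2 := one_div_le_one_div_of_le two_pos this
    linarith
  calc entropy μ M - shannonEnt (fun m => condProb μ M Y y m)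
      ≤ qaryEntropy (Fintype.card 𝓜) (tvDist (prob μ M) (condProb μ M Y y)) :=
        shannonEnt_sub_le_qaryEntropy (prob_nonneg μ M) (condProb_nonneg μ M Y y)
          (sum_prob_eq_one hM) (sum_condProb_eq_one hM hy)
    _ ≤ qaryEntropy (Fintype.card 𝓜) (ε / 2) :=
        (qaryEntropy_strictMonoOn hd).monotoneOn ⟨tvDist_nonneg _ _, hT.trans hhalf⟩
          ⟨by linarith, hhalf⟩ hT
    _ = binEnt (ε / 2) + (ε / 2) * log ((Fintype.card 𝓜 : ℝ) - 1) := by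
        simp only [qaryEntropy, binEnt_eq_binEntropy, Int.cast_sub, Int.cast_natCast, Int.cast_one]
        ring

/-- Per-outcome Fannes–Audenaert-type bound: if the conditional distribution of a
message `M` given `Y = y` is `ε`-close in variational distance to the distribution
of `M`, then `H(M) - H(M | Y = y) ≤ h(ε/2) + (ε/2) log(d-1)`. -/
theorem entropy_difference_bound_of_variational_distance
    {Ω 𝓜 𝒴 : Type*} [MeasurableSpace Ω]
    [Fintype 𝓜] [MeasurableSpace 𝓜] [MeasurableSingletonClass 𝓜]
    [MeasurableSpace 𝒴] [MeasurableSingletonClass 𝒴]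
    (μ : Measure Ω) [IsProbabilityMeasure μ]
    (M : Ω → 𝓜) (Y : Ω → 𝒴) (hM : Measurable M) (hY : Measurable Y)
    (hd : 2 ≤ Fintype.card 𝓜)
    (ε : ℝ) (hε0 : 0 ≤ ε) (hε1 : ε ≤ 1)
    (y : 𝒴) (hy : 0 < (μ (Y ⁻¹' {y})).toReal)
    (hvar : ∑ m, |prob μ M m - condProb μ M Y y m| ≤ ε) :
    entropy μ M - shannonEnt (fun m => condProb μ M Y y m)
      ≤ binEnt (ε / 2) + (ε / 2) * Real.log ((Fintype.card 𝓜 : ℝ) - 1) :=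
  entropy_difference_bound_of_variational_distance_general μ M Y hM hd ε hε0 hε1 y hy hvar
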